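/- (Properties of the Cartan operator; coordinate model.) For a 1-form λ of order k (k ≥ 1) define the Cartan operator 𝕊(λ) := ∑_{j=1}^{k} ((−1)^{j−1} / j!) · d_T^{j−1}(S^jλ), a 1-form of order 2k−1 (each summand regarded as a 1-form of order 2k−1). Then: (i) (𝕊λ)(A)_r = 0 for every A ∈ J_{2k−1} and every r ≥ k, i.e. 𝕊λ is semibasic of order k−1; (ii) applying the Cartan operator of order k+1 to d_Tλ recovers λ: 𝕊(d_Tλ) = λ as 1-forms of order 2k+1, where 𝕊(d_Tλ) := ∑_{j=1}^{k+1} ((−1)^{j−1} / j!) · d_T^{j−1}(S^j(d_Tλ)). -/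

import Mathlib

noncomputable section

/-- Partial Fréchet derivative in slot `r` of a map defined on `Fin m → E`,
as a continuous linear map (zero junk value for `r ≥ m`). -/
def pd {m : ℕ} {E W : Type*} [NormedAddCommGroup E] [NormedSpace ℝ E]
    [NormedAddCommGroup W] [NormedSpace ℝ W]
    (F : (Fin m → E) → W) (r : ℕ) (A : Fin m → E) : E →L[ℝ] W :=
  if h : r < m then
    (fderiv ℝ F A).comp
      (ContinuousLinearMap.pi (Pi.single (⟨r, h⟩ : Fin m) (ContinuousLinearMap.id ℝ E)))
  else 0

/-- The space of `k`-jets `J_k = (ℝ^n)^{k+1}`, slots indexed `0,…,k`. -/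
abbrev Jet (n k : ℕ) := Fin (k + 1) → EuclideanSpace ℝ (Fin n)

/-- A `1`-form of order `k` in the coordinate model: a map from `J_k` to the
`(k+1)`-tuples of linear functionals on `ℝ^n`. -/
abbrev OneForm (n k : ℕ) := Jet n k → Fin (k + 1) → (EuclideanSpace ℝ (Fin n) →L[ℝ] ℝ)

/-- Truncation of a jet to lower order. -/
def trunc {n k m : ℕ} (h : m ≤ k) (A : Jet n k) : Jet n m := fun i => A ⟨i, by omega⟩

/-- The `r`-th component of a 1-form at a jet, with the convention that components of
index `> k` are zero. -/
def comp' {n k : ℕ} (lam : OneForm n k) (A : Jet n k) (r : ℕ) :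
    EuclideanSpace ℝ (Fin n) →L[ℝ] ℝ :=
  if h : r < k + 1 then lam A ⟨r, h⟩ else 0

/-- The `r`-th component at a (possibly higher-order) jet of a 1-form of order `m`,
regarded as a 1-form of any order `k ≥ m` by precomposing with truncation. -/
def compAt {n k m : ℕ} (lam : OneForm n m) (A : Jet n k) (r : ℕ) :
    EuclideanSpace ℝ (Fin n) →L[ℝ] ℝ :=
  if h : m ≤ k then comp' lam (trunc h A) r else 0

/-- The vertical endomorphism: `(Sλ)(A)_r = (r+1) ⬝ λ(A)_{r+1}`. -/
def VS {n k : ℕ} (lam : OneForm n k) : OneForm n k :=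
  fun A r => (((r : ℕ) + 1 : ℕ) : ℝ) • comp' lam A ((r : ℕ) + 1)

/-- The total time derivative of a map `F : J_k → W`:
`D_T F (A) = ∑_{j=0}^{k} ∂_j F(Ā)(A_{j+1})`. -/
def DT {n k : ℕ} {W : Type*} [NormedAddCommGroup W] [NormedSpace ℝ W]
    (F : Jet n k → W) (A : Jet n (k + 1)) : W :=
  ∑ j : Fin (k + 1), pd F j (trunc (Nat.le_succ k) A) (A j.succ)

/-- The total time derivative of a 1-form of order `k`:
`(d_Tλ)(A)_r = D_T(λ_{(r)})(A) + λ(Ā)_{r-1}`, with `λ(Ā)_{-1} := 0`. -/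
def dT {n k : ℕ} (lam : OneForm n k) : OneForm n (k + 1) :=
  fun A r =>
    DT (fun B => comp' lam B r) A +
      match (r : ℕ) with
      | 0 => 0
      | (s + 1) => comp' lam (trunc (Nat.le_succ k) A) s

/-- Iterated total time derivative of a 1-form. -/
def dTiter {n k : ℕ} : (j : ℕ) → OneForm n k → OneForm n (k + j)
  | 0, lam => lam
  | (j + 1), lam => dT (dTiter j lam)

end

noncomputable section

/-- The Cartan operator `𝕊(λ) = ∑_{j=1}^{k} ((−1)^{j−1}/j!) d_T^{j−1}(S^jλ)`, a 1-form of
order `2k−1` (each summand `d_T^{j−1}(S^jλ)` has order `k+j−1` and is regarded as a 1-form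
of order `2k−1` via truncation). -/
def Cartan {n k : ℕ} (lam : OneForm n k) : OneForm n (2 * k - 1) :=
  fun A r => ∑ j ∈ Finset.Icc 1 k,
    ((-1 : ℝ) ^ (j - 1) / (j.factorial : ℝ)) • compAt (dTiter (j - 1) (VS^[j] lam)) A r

/-!
The vertical endomorphism and the total time derivative satisfy `S ∘ d_T = d_T ∘ S + id`,
hence `S^{i+1} ∘ d_T = d_T ∘ S^{i+1} + (i+1) S^i`. With `t_l := ((-1)^l / l!) d_T^l S^l λ`,
the `j`-th summand of `𝕊(d_Tλ)` is therefore `t_{j-1} - t_j`, and the sum telescopes to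
`t_0 - t_{k+1} = λ` because `S^{k+1}λ = 0`. For semibasicity: `S^jλ` has no components of
index `≥ k+1-j`, and every application of `d_T` raises this bound by one.
-/

open scoped ContDiff

variable {n : ℕ}

section TotalDerivative

variable {k : ℕ} {W : Type*} [NormedAddCommGroup W] [NormedSpace ℝ W]

def truncCLM (n : ℕ) {m k : ℕ} (h : m ≤ k) : Jet n k →L[ℝ] Jet n m :=
  ContinuousLinearMap.pi fun i => ContinuousLinearMap.proj ⟨i, by omega⟩

def shiftCLM (n k : ℕ) : Jet n (k + 1) →L[ℝ] Jet n k :=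
  ContinuousLinearMap.pi fun i => ContinuousLinearMap.proj i.succ

theorem pd_apply_eq_fderiv_single (F : Jet n k → W) (j : Fin (k + 1)) (A : Jet n k)
    (v : EuclideanSpace ℝ (Fin n)) : pd F j A v = fderiv ℝ F A (Pi.single j v) := by
  rw [pd, dif_pos j.isLt, ContinuousLinearMap.comp_apply, Fin.eta]
  congr 1
  funext i
  rcases eq_or_ne i j with rfl | h
  · simp
  · simp [h]

theorem DT_eq_fderiv (F : Jet n k → W) (A : Jet n (k + 1)) :
    DT F A = fderiv ℝ F (truncCLM n k.le_succ A) (shiftCLM n k A) := by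
  simp only [DT, pd_apply_eq_fderiv_single, ← map_sum]
  exact congrArg _ (Finset.univ_sum_single _)

theorem DT_eq_zero_of_forall {F : Jet n k → W} (h : ∀ B, F B = 0) (A : Jet n (k + 1)) :
    DT F A = 0 := by
  obtain rfl : F = 0 := funext h
  simp [DT_eq_fderiv]

theorem DT_add {F G : Jet n k → W} (hF : Differentiable ℝ F) (hG : Differentiable ℝ G)
    (A : Jet n (k + 1)) : DT (fun B => F B + G B) A = DT F A + DT G A := by
  simp only [DT_eq_fderiv, fderiv_fun_add (hF _) (hG _), add_apply]

theorem DT_const_smul (c : ℝ) {F : Jet n k → W} (hF : Differentiable ℝ F)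
    (A : Jet n (k + 1)) : DT (fun B => c • F B) A = c • DT F A := by
  simp only [DT_eq_fderiv, fderiv_fun_const_smul (hF _), smul_apply]

theorem DT_comp_trunc {m : ℕ} (h : m ≤ k) {F : Jet n m → W} (hF : Differentiable ℝ F)
    (B : Jet n (k + 1)) :
    DT (fun C => F (trunc h C)) B = DT F (trunc (Nat.succ_le_succ h) B) := by
  change DT (F ∘ truncCLM n h) B = _
  rw [DT_eq_fderiv, DT_eq_fderiv, fderiv_comp _ (hF _) (truncCLM n h).differentiableAt,
    (truncCLM n h).fderiv]
  rfl

theorem ContDiff.DT {F : Jet n k → W} (hF : ContDiff ℝ ∞ F) :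
    ContDiff ℝ ∞ (_root_.DT F) := by
  rw [show _root_.DT F = fun A => fderiv ℝ F (truncCLM n k.le_succ A) (shiftCLM n k A) from
    funext (DT_eq_fderiv F)]
  exact ((hF.fderiv_right le_rfl).comp (truncCLM n _).contDiff).clm_apply (shiftCLM n k).contDiff

end TotalDerivative

theorem alternating_factorial_smul_add {E : Type*} [AddCommGroup E] [Module ℝ E] (i : ℕ)
    (x y : E) :
    ((-1 : ℝ) ^ i / (i + 1).factorial) • (x + ((i + 1 : ℕ) : ℝ) • y) =
      ((-1 : ℝ) ^ i / i.factorial) • y - ((-1 : ℝ) ^ (i + 1) / (i + 1).factorial) • x := by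
  rw [Nat.factorial_succ]
  push_cast
  match_scalars <;> field_simp; ring

namespace OneForm

variable {k : ℕ}

def lift (μ : OneForm n k) : OneForm n (k + 1) :=
  fun A r => comp' μ (trunc k.le_succ A) r

section Components

variable {μ ν : OneForm n k} {A : Jet n k} {r : ℕ}

theorem comp'_of_lt (h : r < k + 1) : comp' μ A r = μ A ⟨r, h⟩ := dif_pos h

theorem comp'_of_le (h : k + 1 ≤ r) : comp' μ A r = 0 := dif_neg (by omega)

theorem ext_comp' (h : ∀ A r, comp' μ A r = comp' ν A r) : μ = ν := by
  funext A r
  simpa only [comp'_of_lt r.isLt] using h A r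

theorem comp'_add : comp' (μ + ν) A r = comp' μ A r + comp' ν A r := by
  unfold comp'; split <;> simp

theorem comp'_smul (c : ℝ) : comp' (c • μ) A r = c • comp' μ A r := by
  unfold comp'; split <;> simp

theorem comp'_VS : comp' (VS μ) A r = ((r + 1 : ℕ) : ℝ) • comp' μ A (r + 1) := by
  rcases lt_or_ge r (k + 1) with h | h
  · exact comp'_of_lt h
  · rw [comp'_of_le h, comp'_of_le (by omega), smul_zero]

theorem comp'_lift (A : Jet n (k + 1)) :
    comp' (lift μ) A r = comp' μ (trunc k.le_succ A) r := by
  rcases lt_or_ge r (k + 2) with h | h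
  · exact comp'_of_lt h
  · rw [comp'_of_le h, comp'_of_le (by omega)]

theorem comp'_dT_zero (A : Jet n (k + 1)) :
    comp' (dT μ) A 0 = DT (fun B => comp' μ B 0) A :=
  (comp'_of_lt (by omega)).trans (add_zero _)

theorem comp'_dT_succ (A : Jet n (k + 1)) (s : ℕ) :
    comp' (dT μ) A (s + 1) =
      DT (fun B => comp' μ B (s + 1)) A + comp' μ (trunc k.le_succ A) s := by
  rcases lt_or_ge (s + 1) (k + 2) with h | h
  · exact comp'_of_lt h
  · rw [comp'_of_le h, DT_eq_zero_of_forall (fun B => comp'_of_le (by omega)),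
      comp'_of_le (by omega), add_zero]

theorem compAt_add {M : ℕ} (A : Jet n M) :
    compAt (μ + ν) A r = compAt μ A r + compAt ν A r := by
  unfold compAt; split <;> simp [comp'_add]

theorem compAt_smul (c : ℝ) {M : ℕ} (A : Jet n M) :
    compAt (c • μ) A r = c • compAt μ A r := by
  unfold compAt; split <;> simp [comp'_smul]

theorem compAt_zero {M : ℕ} (A : Jet n M) (r : ℕ) : compAt (0 : OneForm n k) A r = 0 := by
  simpa using compAt_smul (μ := 0) 0 A (r := r)

end Components

section Smoothness

variable {μ : OneForm n k}

theorem _root_.ContDiff.contDiff_comp' (hμ : ContDiff ℝ ∞ μ) (r : ℕ) :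
    ContDiff ℝ ∞ fun A => comp' μ A r := by
  unfold _root_.comp'
  split
  · exact contDiff_pi.1 hμ _
  · exact contDiff_const

theorem _root_.ContDiff.differentiable_comp' (hμ : ContDiff ℝ ∞ μ) (r : ℕ) :
    Differentiable ℝ fun A => comp' μ A r :=
  (hμ.contDiff_comp' r).differentiable (by simp)

theorem _root_.ContDiff.VS (hμ : ContDiff ℝ ∞ μ) : ContDiff ℝ ∞ (VS μ) :=
  contDiff_pi.2 fun _ => (hμ.contDiff_comp' _).const_smul _

theorem _root_.ContDiff.iterate_VS (hμ : ContDiff ℝ ∞ μ) (j : ℕ) :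
    ContDiff ℝ ∞ (VS^[j] μ) := by
  induction j with
  | zero => exact hμ
  | succ j ih => rw [Function.iterate_succ_apply']; exact ih.VS

theorem _root_.ContDiff.lift (hμ : ContDiff ℝ ∞ μ) : ContDiff ℝ ∞ (lift μ) :=
  contDiff_pi.2 fun r => (hμ.contDiff_comp' r).comp (truncCLM n k.le_succ).contDiff

theorem _root_.ContDiff.dT (hμ : ContDiff ℝ ∞ μ) : ContDiff ℝ ∞ (dT μ) := by
  refine contDiff_pi.2 fun r => (hμ.contDiff_comp' r).DT.add ?_
  rcases (r : ℕ) with _ | s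
  · exact contDiff_const
  · exact (hμ.contDiff_comp' s).comp (truncCLM n k.le_succ).contDiff

theorem _root_.ContDiff.dTiter (hμ : ContDiff ℝ ∞ μ) (i : ℕ) :
    ContDiff ℝ ∞ (dTiter i μ) := by
  induction i with
  | zero => exact hμ
  | succ i ih => exact ih.dT

end Smoothness

section Algebra

variable {μ ν : OneForm n k}

theorem VS_add (μ ν : OneForm n k) : VS (μ + ν) = VS μ + VS ν :=
  ext_comp' fun A r => by rw [comp'_add, comp'_VS, comp'_VS, comp'_VS, comp'_add, smul_add]

theorem VS_smul (c : ℝ) (μ : OneForm n k) : VS (c • μ) = c • VS μ :=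
  ext_comp' fun A r => by rw [comp'_smul, comp'_VS, comp'_VS, comp'_smul, smul_comm]

theorem VS_lift (μ : OneForm n k) : VS (lift μ) = lift (VS μ) :=
  ext_comp' fun A r => by rw [comp'_VS, comp'_lift, comp'_lift, comp'_VS]

theorem dT_add (hμ : ContDiff ℝ ∞ μ) (hν : ContDiff ℝ ∞ ν) :
    dT (μ + ν) = dT μ + dT ν := by
  refine ext_comp' fun A r => ?_
  rcases r with _ | s
  · simp only [comp'_add, comp'_dT_zero, DT_add (hμ.differentiable_comp' 0)
      (hν.differentiable_comp' 0)]
  · simp only [comp'_add, comp'_dT_succ, DT_add (hμ.differentiable_comp' _)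
      (hν.differentiable_comp' _)]
    abel

theorem dT_smul (c : ℝ) (hμ : ContDiff ℝ ∞ μ) : dT (c • μ) = c • dT μ := by
  refine ext_comp' fun A r => ?_
  rcases r with _ | s
  · simp only [comp'_smul, comp'_dT_zero, DT_const_smul c (hμ.differentiable_comp' 0)]
  · simp only [comp'_smul, comp'_dT_succ, DT_const_smul c (hμ.differentiable_comp' _),
      smul_add]

theorem dTiter_add (hμ : ContDiff ℝ ∞ μ) (hν : ContDiff ℝ ∞ ν) (i : ℕ) :
    dTiter i (μ + ν) = dTiter i μ + dTiter i ν := by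
  induction i with
  | zero => rfl
  | succ i ih => exact (congrArg dT ih).trans (dT_add (hμ.dTiter i) (hν.dTiter i))

theorem dTiter_smul (c : ℝ) (hμ : ContDiff ℝ ∞ μ) (i : ℕ) :
    dTiter i (c • μ) = c • dTiter i μ := by
  induction i with
  | zero => rfl
  | succ i ih => exact (congrArg dT ih).trans (dT_smul c (hμ.dTiter i))

theorem dTiter_zero (i : ℕ) : dTiter i (0 : OneForm n k) = 0 := by
  simpa using dTiter_smul 0 (μ := 0) contDiff_zero_fun i

end Algebra

section Commutation

variable {μ : OneForm n k}

theorem VS_dT (hμ : ContDiff ℝ ∞ μ) : VS (dT μ) = dT (VS μ) + lift μ := by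
  refine ext_comp' fun A r => ?_
  have hVS : (fun B => comp' (VS μ) B r) = fun B => ((r + 1 : ℕ) : ℝ) • comp' μ B (r + 1) :=
    funext fun B => comp'_VS
  rw [comp'_add, comp'_VS, comp'_dT_succ, comp'_lift]
  rcases r with _ | s
  · rw [comp'_dT_zero, hVS, DT_const_smul _ (hμ.differentiable_comp' 1)]
    simp
  · rw [comp'_dT_succ, hVS, DT_const_smul _ (hμ.differentiable_comp' _), comp'_VS]
    push_cast
    module

theorem iterate_VS_succ_dT (hμ : ContDiff ℝ ∞ μ) (i : ℕ) :
    VS^[i + 1] (dT μ) = dT (VS^[i + 1] μ) + ((i + 1 : ℕ) : ℝ) • lift (VS^[i] μ) := by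
  induction i with
  | zero => simpa using VS_dT hμ
  | succ i ih =>
    rw [Function.iterate_succ_apply' VS (i + 1), ih, VS_add, VS_smul, VS_lift,
      VS_dT (hμ.iterate_VS _), ← Function.iterate_succ_apply' VS (i + 1),
      ← Function.iterate_succ_apply' VS i]
    push_cast
    module

theorem comp'_dTiter_lift (hμ : ContDiff ℝ ∞ μ) (i : ℕ) (B : Jet n (k + 1 + i)) (r : ℕ) :
    comp' (dTiter i (lift μ)) B r = comp' (dTiter i μ) (trunc (by omega) B) r := by
  induction i generalizing r with
  | zero => exact comp'_lift B
  | succ i ih =>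
    have hDT := DT_comp_trunc (by omega : k + i ≤ k + 1 + i)
      ((hμ.dTiter i).differentiable_comp' r) B
    change comp' (dT (dTiter i (lift μ))) B r = comp' (dT (dTiter i μ)) _ r
    simp only [← ih] at hDT
    rcases r with _ | s
    · rw [comp'_dT_zero, comp'_dT_zero, hDT]
    · rw [comp'_dT_succ, comp'_dT_succ, hDT, ih]
      rfl

theorem compAt_dTiter_lift (hμ : ContDiff ℝ ∞ μ) (i : ℕ) {M : ℕ} (h : k + 1 + i ≤ M)
    (A : Jet n M) (r : ℕ) : compAt (dTiter i (lift μ)) A r = compAt (dTiter i μ) A r := by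
  rw [compAt, dif_pos h, comp'_dTiter_lift hμ, compAt, dif_pos (by omega)]
  rfl

theorem dT_congr_heq {a b : ℕ} (h : a = b) {x : OneForm n a} {y : OneForm n b} (hxy : x ≍ y) :
    dT x ≍ dT y := by
  subst h
  rw [eq_of_heq hxy]

theorem compAt_congr_heq {a b : ℕ} (h : a = b) {x : OneForm n a} {y : OneForm n b} (hxy : x ≍ y)
    {M : ℕ} (A : Jet n M) (r : ℕ) : compAt x A r = compAt y A r := by
  subst h
  rw [eq_of_heq hxy]

theorem dTiter_dT_heq (μ : OneForm n k) (i : ℕ) : dTiter i (dT μ) ≍ dTiter (i + 1) μ := by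
  induction i with
  | zero => rfl
  | succ i ih => exact dT_congr_heq (Nat.add_right_comm k 1 i) ih

theorem compAt_dTiter_iterate_VS_succ_dT (hμ : ContDiff ℝ ∞ μ) (i : ℕ) {M : ℕ}
    (h : k + 1 + i ≤ M) (A : Jet n M) (r : ℕ) :
    compAt (dTiter i (VS^[i + 1] (dT μ))) A r =
      compAt (dTiter (i + 1) (VS^[i + 1] μ)) A r +
        ((i + 1 : ℕ) : ℝ) • compAt (dTiter i (VS^[i] μ)) A r := by
  have hSi := hμ.iterate_VS i
  rw [iterate_VS_succ_dT hμ, dTiter_add (ν := ((i + 1 : ℕ) : ℝ) • lift (VS^[i] μ))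
      (hμ.iterate_VS _).dT (hSi.lift.const_smul ((i + 1 : ℕ) : ℝ)), dTiter_smul _ hSi.lift,
    compAt_add, compAt_smul, compAt_dTiter_lift hSi i h,
    compAt_congr_heq (Nat.add_right_comm k 1 i) (dTiter_dT_heq _ i)]

end Commutation

section Vanishing

theorem comp'_iterate_VS_of_lt (μ : OneForm n k) (j : ℕ) (A : Jet n k) {r : ℕ}
    (h : k < r + j) : comp' (VS^[j] μ) A r = 0 := by
  induction j generalizing r with
  | zero => exact comp'_of_le (by omega)
  | succ j ih => rw [Function.iterate_succ_apply', comp'_VS, ih (by omega), smul_zero]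

theorem iterate_VS_eq_zero (μ : OneForm n k) : VS^[k + 1] μ = 0 := by
  funext A r
  simpa only [comp'_of_lt r.isLt, Fin.eta, Pi.zero_apply] using
    comp'_iterate_VS_of_lt μ (k + 1) A (r := r) (by omega)

theorem comp'_dTiter_of_le {μ : OneForm n k} {t : ℕ} (h : ∀ A r, t ≤ r → comp' μ A r = 0)
    (i : ℕ) (A : Jet n (k + i)) {r : ℕ} (hr : t + i ≤ r) : comp' (dTiter i μ) A r = 0 := by
  induction i generalizing r with
  | zero => exact h A r hr
  | succ i ih =>
    obtain ⟨s, rfl⟩ : ∃ s, r = s + 1 := ⟨r - 1, by omega⟩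
    change comp' (dT (dTiter i μ)) A (s + 1) = 0
    rw [comp'_dT_succ, DT_eq_zero_of_forall (fun B => ih B (by omega)), ih _ (by omega), add_zero]

end Vanishing

section Cartan

variable {μ : OneForm n k}

theorem comp'_Cartan_of_lt (μ : OneForm n k) (A : Jet n (2 * k - 1)) {r : ℕ}
    (h : r < 2 * k - 1 + 1) : comp' (Cartan μ) A r = ∑ j ∈ Finset.Icc 1 k,
      ((-1 : ℝ) ^ (j - 1) / (j.factorial : ℝ)) • compAt (dTiter (j - 1) (VS^[j] μ)) A r :=
  comp'_of_lt h

theorem comp'_Cartan_of_le (μ : OneForm n k) (A : Jet n (2 * k - 1)) {r : ℕ} (hr : k ≤ r) :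
    comp' (Cartan μ) A r = 0 := by
  rcases lt_or_ge r (2 * k - 1 + 1) with hlt | hge
  · rw [comp'_Cartan_of_lt μ A hlt]
    refine Finset.sum_eq_zero fun j hj => ?_
    obtain ⟨hj1, hjk⟩ := Finset.mem_Icc.1 hj
    have hSj : ∀ B s, k + 1 - j ≤ s → comp' (VS^[j] μ) B s = 0 :=
      fun B s hs => comp'_iterate_VS_of_lt μ j B (by omega)
    rw [compAt, dif_pos (by omega), comp'_dTiter_of_le hSj _ _ (by omega), smul_zero]
  · exact comp'_of_le hge

/-- The term `t_l` of the telescoping sum for `𝕊(d_T μ)`. -/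
def cartanTerm (μ : OneForm n k) (l : ℕ) {M : ℕ} (A : Jet n M) (r : ℕ) :
    EuclideanSpace ℝ (Fin n) →L[ℝ] ℝ :=
  ((-1 : ℝ) ^ l / l.factorial) • compAt (dTiter l (VS^[l] μ)) A r

theorem cartanTerm_sub_cartanTerm_succ (hμ : ContDiff ℝ ∞ μ) (i : ℕ) {M : ℕ}
    (h : k + 1 + i ≤ M) (A : Jet n M) (r : ℕ) :
    cartanTerm μ i A r - cartanTerm μ (i + 1) A r =
      ((-1 : ℝ) ^ i / (i + 1).factorial) • compAt (dTiter i (VS^[i + 1] (dT μ))) A r := by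
  rw [compAt_dTiter_iterate_VS_succ_dT hμ i h]
  exact (alternating_factorial_smul_add i _ _).symm

theorem comp'_Cartan_dT (hμ : ContDiff ℝ ∞ μ) (A : Jet n (2 * (k + 1) - 1)) (r : ℕ) :
    comp' (Cartan (dT μ)) A r = compAt μ A r := by
  rcases lt_or_ge r (2 * (k + 1) - 1 + 1) with hlt | hge
  · calc comp' (Cartan (dT μ)) A r
        = ∑ i ∈ Finset.range (k + 1), (cartanTerm μ i A r - cartanTerm μ (i + 1) A r) := by
          rw [comp'_Cartan_of_lt _ A hlt, ← Finset.Ico_add_one_right_eq_Icc,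
            Finset.sum_Ico_eq_sum_range, Nat.add_sub_cancel]
          refine Finset.sum_congr rfl fun i hi => ?_
          rw [add_comm 1 i, Nat.add_sub_cancel, cartanTerm_sub_cartanTerm_succ hμ i
            (by rw [Finset.mem_range] at hi; omega)]
      _ = cartanTerm μ 0 A r - cartanTerm μ (k + 1) A r := Finset.sum_range_sub' _ _
      _ = compAt μ A r := by
          rw [cartanTerm, cartanTerm, iterate_VS_eq_zero, dTiter_zero, compAt_zero]
          simp only [pow_zero, Nat.factorial_zero, Nat.cast_one, div_one, one_smul, smul_zero,
            sub_zero]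
          rfl
  · rw [comp'_of_le hge, compAt, dif_pos (by omega), comp'_of_le (by omega)]

end Cartan

end OneForm

theorem cartan_operator_properties_general (n k : ℕ)
    (lam : OneForm n k) (hlam : ContDiff ℝ (⊤ : ℕ∞) lam) :
    (∀ (A : Jet n (2 * k - 1)) (r : ℕ), k ≤ r → comp' (Cartan lam) A r = 0) ∧
      (∀ (A : Jet n (2 * (k + 1) - 1)) (r : ℕ),
        comp' (Cartan (dT lam)) A r = compAt lam A r) :=
  ⟨fun A _ hr => OneForm.comp'_Cartan_of_le lam A hr, OneForm.comp'_Cartan_dT hlam⟩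

/-- **Properties of the Cartan operator** (coordinate model): for a smooth 1-form `λ` of
order `k ≥ 1`:
(i) all components of `𝕊λ` of index `≥ k` vanish, i.e. `𝕊λ` is semibasic of order `k−1`;
(ii) applying the Cartan operator of order `k+1` to `d_Tλ` recovers `λ`:
`𝕊(d_Tλ) = λ` as 1-forms of order `2k+1`. -/
theorem cartan_operator_properties (n k : ℕ) (hn : 1 ≤ n) (hk : 1 ≤ k)
    (lam : OneForm n k) (hlam : ContDiff ℝ (⊤ : ℕ∞) lam) :
    (∀ (A : Jet n (2 * k - 1)) (r : ℕ), k ≤ r → comp' (Cartan lam) A r = 0) ∧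
      (∀ (A : Jet n (2 * (k + 1) - 1)) (r : ℕ),
        comp' (Cartan (dT lam)) A r = compAt lam A r) :=
  cartan_operator_properties_general n k lam hlam

end
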